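/- arXiv:1903.06371 — 2 statements merged into one kernel-verified Lean document; each statement's English description precedes it below -/
import Mathlib

section
/- In the implicit-function setup for η, assume additionally that the d×d matrix β − Σ_{i=1}^{n} E[Z_i] γ_i κ_i^T is invertible, and define A ∈ ℝ^d by A^T = (Σ_{i=1}^{n} E[Z_i] κ_i^T) (β − Σ_{i=1}^{n} E[Z_i] γ_i κ_i^T)^{-1}. Then u*'(0) = A and η'(0) = A^T b + Σ_{i=1}^{n} λ_i E[Z_i] (1 + A^T γ_i). -/
open MeasureTheory Real Filter ProbabilityTheory Matrix

/-!
Differentiate the defining system at `0`. Since `u*(0) = 0`, the quadratic term has zero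
derivative there, and the chain rule with `mgf' (0) = E[Z]` turns the system into the linear
equation `u*'(0)ᵀ (β − ∑ᵢ E[Zᵢ] γᵢ κᵢᵀ) = ∑ᵢ E[Zᵢ] κᵢᵀ`, which is solved by inverting the matrix.
The same chain rule then gives `η'(0)`.
-/

lemma zero_mem_interior_integrableExpSet {Ω : Type*} [MeasurableSpace Ω] {μ : Measure Ω}
    {X : Ω → ℝ} {ε : ℝ} (hε : 0 < ε)
    (h : ∀ θ : ℝ, |θ| < ε → Integrable (fun ω => exp (θ * X ω)) μ) :
    0 ∈ interior (integrableExpSet X μ) :=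
  mem_interior_iff_mem_nhds.2 <| mem_of_superset (Metric.ball_mem_nhds 0 hε) fun θ hθ =>
    h θ (by simpa using hθ)

lemma HasDerivAt.mgf_of_eq_zero {Ω : Type*} [MeasurableSpace Ω] {μ : Measure Ω} {X : Ω → ℝ}
    {g : ℝ → ℝ} {g' x : ℝ} (hg : HasDerivAt g g' x) (hgx : g x = 0)
    (h0 : 0 ∈ interior (integrableExpSet X μ)) :
    HasDerivAt (fun θ => mgf X μ (g θ)) (μ[X] * g') x := by
  have hmgf := hasDerivAt_mgf h0
  simp only [zero_mul, exp_zero, mul_one] at hmgf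
  exact (hgx ▸ hmgf).comp x hg

lemma HasDerivAt.dotProduct_const {d : ℕ} {u : ℝ → Fin d → ℝ} {u' : Fin d → ℝ} {x : ℝ}
    (hu : HasDerivAt u u' x) (v : Fin d → ℝ) :
    HasDerivAt (fun θ => u θ ⬝ᵥ v) (u' ⬝ᵥ v) x :=
  HasDerivAt.fun_sum fun a _ => (hasDerivAt_pi.1 hu a).mul_const (v a)

lemma hasDerivAt_sum_mul_mul_of_eq_zero {d : ℕ} {u : ℝ → Fin d → ℝ} {u' : Fin d → ℝ} {x : ℝ}
    (hu : HasDerivAt u u' x) (hux : u x = 0) (Q : Matrix (Fin d) (Fin d) ℝ) :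
    HasDerivAt (fun θ => ∑ i, ∑ i', u θ i * Q i i' * u θ i') 0 x := by
  have h := HasDerivAt.fun_sum fun i (_ : i ∈ Finset.univ) => HasDerivAt.fun_sum
    fun i' (_ : i' ∈ Finset.univ) =>
      ((hasDerivAt_pi.1 hu i).mul_const (Q i i')).mul (hasDerivAt_pi.1 hu i')
  simpa [hux] using h

lemma eq_transpose_inv_mulVec_of_vecMul_eq {d : ℕ} {M : Matrix (Fin d) (Fin d) ℝ}
    (hM : IsUnit M.det) {v c : Fin d → ℝ} (h : v ᵥ* M = c) : v = M⁻¹ᵀ *ᵥ c := by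
  rw [mulVec_transpose, ← h, vecMul_vecMul, mul_nonsing_inv _ hM, vecMul_one]

lemma vecMul_sub_sum_smul_vecMulVec_eq_of_hasDerivAt {n d : ℕ} {u : ℝ → Fin d → ℝ}
    {u' : Fin d → ℝ} (hu : HasDerivAt u u' 0) (hu0 : u 0 = 0)
    {β : Matrix (Fin d) (Fin d) ℝ} {α : Fin d → Matrix (Fin d) (Fin d) ℝ}
    {κ γ : Fin n → Fin d → ℝ} {φ : Fin n → ℝ → ℝ} {E : Fin n → ℝ}
    (hφ : ∀ i, HasDerivAt (φ i) (E i * (1 + u' ⬝ᵥ γ i)) 0)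
    (hsys : ∀ᶠ θ in nhds 0, ∀ j, (∑ i, u θ i * β i j)
      - (1/2) * (∑ i, ∑ i', u θ i * α j i i' * u θ i') - ∑ i, (φ i θ - 1) * κ i j = 0) :
    u' ᵥ* (β - ∑ i, E i • vecMulVec (γ i) (κ i)) = fun j => ∑ i, E i * κ i j := by
  ext j
  have hF := ((hu.dotProduct_const fun i => β i j).sub
      ((hasDerivAt_sum_mul_mul_of_eq_zero hu hu0 (α j)).const_mul (1/2))).sub
    (HasDerivAt.fun_sum fun i (_ : i ∈ Finset.univ) => ((hφ i).sub_const 1).mul_const (κ i j))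
  have hF0 := hF.unique <| (hasDerivAt_const (0 : ℝ) (0 : ℝ)).congr_of_eventuallyEq <|
    hsys.mono fun θ hθ => hθ j
  simp only [vecMul_sub, vecMul_sum, vecMul_smul, vecMul_vecMulVec, Pi.sub_apply,
    Finset.sum_apply, Pi.smul_apply, smul_eq_mul]
  simp only [mul_zero, sub_zero, mul_add, mul_one, add_mul, Finset.sum_add_distrib] at hF0
  change u' ⬝ᵥ (fun i => β i j) - _ = _
  linarith [show ∑ i, E i * (u' ⬝ᵥ γ i * κ i j) = ∑ i, E i * (u' ⬝ᵥ γ i) * κ i j from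
    Finset.sum_congr rfl fun i _ => (mul_assoc _ _ _).symm]

theorem implicit_eta_first_derivative_at_zero_general
    {Ω : Type*} [MeasurableSpace Ω] (μ : MeasureTheory.Measure Ω)
    (n d : ℕ) (b : Fin d → ℝ) (β : Matrix (Fin d) (Fin d) ℝ)
    (α : Fin d → Matrix (Fin d) (Fin d) ℝ)
    (lam : Fin n → ℝ)
    (κ : Fin n → Fin d → ℝ) (γ : Fin n → Fin d → ℝ)
    -- nonnegative random variables with m.g.f. finite near `0`
    (Z : Fin n → Ω → ℝ)
    (ε₀ : ℝ) (hε₀ : 0 < ε₀)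
    (hZmgf : ∀ i, ∀ θ : ℝ, |θ| < ε₀ → Integrable (fun ω => Real.exp (θ * Z i ω)) μ)
    -- a neighborhood `U` of `0`
    (U : Set ℝ) (hUopen : IsOpen U) (hU0 : (0 : ℝ) ∈ U)
    -- the implicit function `u*`
    (ustar : ℝ → Fin d → ℝ) (hu0 : ustar 0 = 0)
    (husmooth : ContDiffOn ℝ 2 ustar U)
    -- the defining system of nonlinear equations for `u*`
    (heq : ∀ θ ∈ U, ∀ j : Fin d,
      (∑ i, ustar θ i * β i j)
        - (1/2) * (∑ i, ∑ i', ustar θ i * α j i i' * ustar θ i')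
        - (∑ i : Fin n,
            ((∫ ω, Real.exp ((θ + ∑ a, ustar θ a * γ i a) * Z i ω) ∂μ) - 1) * κ i j) = 0)
    -- the definition of `η`
    (η : ℝ → ℝ)
    (hη : ∀ θ : ℝ, η θ = (∑ a, ustar θ a * b a)
      + ∑ i : Fin n, lam i
          * ((∫ ω, Real.exp ((θ + ∑ a, ustar θ a * γ i a) * Z i ω) ∂μ) - 1))
    -- `M = β − ∑ᵢ E[Zᵢ] γᵢ κᵢᵀ` is invertible
    (M : Matrix (Fin d) (Fin d) ℝ)
    (hM : M = β - ∑ i : Fin n, (∫ ω, Z i ω ∂μ) • Matrix.vecMulVec (γ i) (κ i))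
    (hMinv : IsUnit M.det)
    -- `Aᵀ = (∑ᵢ E[Zᵢ] κᵢᵀ) M⁻¹`
    (A : Fin d → ℝ)
    (hA : A = Matrix.mulVec (Matrix.transpose M⁻¹)
      (fun a => ∑ i : Fin n, (∫ ω, Z i ω ∂μ) * κ i a)) :
    (∀ j : Fin d, deriv (fun θ' => ustar θ' j) 0 = A j) ∧
    deriv η 0 = (∑ a, A a * b a)
      + ∑ i : Fin n, lam i * (∫ ω, Z i ω ∂μ) * (1 + ∑ a, A a * γ i a) := by
  have hu : HasDerivAt ustar (deriv ustar 0) 0 :=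
    ((husmooth.differentiableOn (by norm_num)).differentiableAt (hUopen.mem_nhds hU0)).hasDerivAt
  set u' := deriv ustar 0
  have hφ (i : Fin n) : HasDerivAt (fun θ => mgf (Z i) μ (θ + ustar θ ⬝ᵥ γ i))
      (μ[Z i] * (1 + u' ⬝ᵥ γ i)) 0 :=
    ((hasDerivAt_id 0).add (hu.dotProduct_const (γ i))).mgf_of_eq_zero (by simp [hu0])
      (zero_mem_interior_integrableExpSet hε₀ (hZmgf i))
  have huA : u' = A := hA ▸ eq_transpose_inv_mulVec_of_vecMul_eq hMinv (hM ▸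
    vecMul_sub_sum_smul_vecMulVec_eq_of_hasDerivAt hu hu0 hφ
      (eventually_of_mem (hUopen.mem_nhds hU0) heq))
  have hη' : HasDerivAt η (u' ⬝ᵥ b + ∑ i, lam i * (μ[Z i] * (1 + u' ⬝ᵥ γ i))) 0 := by
    rw [funext hη]
    exact (hu.dotProduct_const b).add
      (HasDerivAt.fun_sum fun i _ => ((hφ i).sub_const 1).const_mul (lam i))
  refine ⟨fun j => huA ▸ (hasDerivAt_pi.1 hu j).deriv, ?_⟩
  rw [hη'.deriv, ← huA]
  simp only [mul_assoc]
  rfl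

/-- in the implicit-function setup for `η`, if
`β − ∑ᵢ E[Zᵢ] γᵢ κᵢᵀ` is invertible and `Aᵀ = (∑ᵢ E[Zᵢ] κᵢᵀ)(β − ∑ᵢ E[Zᵢ] γᵢ κᵢᵀ)⁻¹`, then
`u*'(0) = A` and `η'(0) = Aᵀ b + ∑ᵢ λᵢ E[Zᵢ](1 + Aᵀ γᵢ)`. -/
theorem implicit_eta_first_derivative_at_zero
    {Ω : Type*} [MeasurableSpace Ω] (μ : MeasureTheory.Measure Ω) [IsProbabilityMeasure μ]
    (n d : ℕ) (b : Fin d → ℝ) (β : Matrix (Fin d) (Fin d) ℝ)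
    (α : Fin d → Matrix (Fin d) (Fin d) ℝ) (hα : ∀ j, (α j).IsSymm)
    (lam : Fin n → ℝ) (hlam : ∀ i, 0 ≤ lam i)
    (κ : Fin n → Fin d → ℝ) (γ : Fin n → Fin d → ℝ)
    -- nonnegative random variables with m.g.f. finite near `0`
    (Z : Fin n → Ω → ℝ) (hZmeas : ∀ i, Measurable (Z i)) (hZnn : ∀ i ω, 0 ≤ Z i ω)
    (ε₀ : ℝ) (hε₀ : 0 < ε₀)
    (hZmgf : ∀ i, ∀ θ : ℝ, |θ| < ε₀ → Integrable (fun ω => Real.exp (θ * Z i ω)) μ)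
    -- a neighborhood `U` of `0`
    (U : Set ℝ) (hUopen : IsOpen U) (hU0 : (0 : ℝ) ∈ U)
    -- the implicit function `u*`
    (ustar : ℝ → Fin d → ℝ) (hu0 : ustar 0 = 0)
    (husmooth : ContDiffOn ℝ 2 ustar U)
    -- the relevant moments are finite
    (hZint : ∀ i : Fin n, ∀ m : ℕ, m ≤ 2 → ∀ θ ∈ U,
      Integrable (fun ω => Z i ω ^ m
        * Real.exp ((θ + ∑ a, ustar θ a * γ i a) * Z i ω)) μ)
    -- the defining system of nonlinear equations for `u*`
    (heq : ∀ θ ∈ U, ∀ j : Fin d,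
      (∑ i, ustar θ i * β i j)
        - (1/2) * (∑ i, ∑ i', ustar θ i * α j i i' * ustar θ i')
        - (∑ i : Fin n,
            ((∫ ω, Real.exp ((θ + ∑ a, ustar θ a * γ i a) * Z i ω) ∂μ) - 1) * κ i j) = 0)
    -- the definition of `η`
    (η : ℝ → ℝ)
    (hη : ∀ θ : ℝ, η θ = (∑ a, ustar θ a * b a)
      + ∑ i : Fin n, lam i
          * ((∫ ω, Real.exp ((θ + ∑ a, ustar θ a * γ i a) * Z i ω) ∂μ) - 1))
    -- `M = β − ∑ᵢ E[Zᵢ] γᵢ κᵢᵀ` is invertible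
    (M : Matrix (Fin d) (Fin d) ℝ)
    (hM : M = β - ∑ i : Fin n, (∫ ω, Z i ω ∂μ) • Matrix.vecMulVec (γ i) (κ i))
    (hMinv : IsUnit M.det)
    -- `Aᵀ = (∑ᵢ E[Zᵢ] κᵢᵀ) M⁻¹`
    (A : Fin d → ℝ)
    (hA : A = Matrix.mulVec (Matrix.transpose M⁻¹)
      (fun a => ∑ i : Fin n, (∫ ω, Z i ω ∂μ) * κ i a)) :
    (∀ j : Fin d, deriv (fun θ' => ustar θ' j) 0 = A j) ∧
    deriv η 0 = (∑ a, A a * b a)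
      + ∑ i : Fin n, lam i * (∫ ω, Z i ω ∂μ) * (1 + ∑ a, A a * γ i a) :=
  implicit_eta_first_derivative_at_zero_general μ n d b β α lam κ γ Z ε₀ hε₀ hZmgf U hUopen hU0
    ustar hu0 husmooth heq η hη M hM hMinv A hA
end

section
/- In the implicit-function setup for η, assume u* is k-times continuously differentiable near 0 and that E[Z_i^m e^{θ' Z_i}] < ∞ for all m ≤ k and θ' in a neighborhood of the relevant exponents. Then for every k ≥ 1 and θ in the neighborhood, η^{(k)}(θ) = ((u*)^{(k)}(θ))^T b + Σ_{i=1}^{n} λ_i Σ_{j=0}^{k} C(k,j) Σ_{(m_1,…,m_j) ∈ S_j} ( j! · E[ Z_i^{k-j} e^{θ Z_i} e^{u*(θ)^T γ_i Z_i} Π_{ℓ=1}^{j} ((u*)^{(ℓ)}(θ)^T γ_i Z_i)^{m_ℓ} ] ) / ( m_1! (1!)^{m_1} m_2! (2!)^{m_2} ⋯ m_j! (j!)^{m_j} ), where C(k,j) is the binomial coefficient and the j = 0 term is λ_i E[Z_i^k e^{(θ + u*(θ)^T γ_i) Z_i}]. -/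
/-!
Differentiating `k` times under the integral sign, which the integrability of
`Z ^ p * exp ((t + g t) * Z)` for `p ≤ k` justifies locally uniformly in `t`, reduces the claim
to the derivatives of `t ↦ exp ((t + g t) * z)` for fixed `z ≥ 0`, where `g t = u*(t)ᵀ γ`.
Leibniz's rule for `exp (z t) * exp (g t * z)` gives the binomial sum over `q`, and Faà di Bruno's
formula for `exp ∘ h` writes the `q`-th derivative of `exp (g t * z)` as `exp (g t * z)` times the
complete Bell polynomial in the `z g⁽ʲ⁾(t)`. The latter is proved by induction on `q` from the
recursion `Y (q + 1) = ∑ j, C(q, j) v (j + 1) Y (q - j)`, which is a bijection on partition types: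
remove one part of size `j + 1`.
-/

open MeasureTheory Real Filter

/-- The index set `S_j` of Faà di Bruno's formula: the set of tuples `(m_1, …, m_j)` of
nonnegative integers with `1·m_1 + 2·m_2 + ⋯ + j·m_j = j` (here `m ℓ` is `m_{ℓ+1}`). -/
def faaDiBrunoS (j : ℕ) : Finset (Fin j → ℕ) :=
  ((Finset.univ : Finset (Fin j → Fin (j + 1))).image
      (fun (m : Fin j → Fin (j + 1)) (ℓ : Fin j) => (m ℓ : ℕ))).filter
    fun m => (∑ ℓ : Fin j, ((ℓ : ℕ) + 1) * m ℓ) = j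

open Finset Function Nat Topology

@[to_additive]
theorem Finset.prod_apply_update_of_eq_mul {ι α M : Type*} [Fintype ι] [DecidableEq ι]
    [CommMonoid M] {G : ι → α → M} {m : ι → α} {i : ι} {c : α} {x : M}
    (h : G i c = x * G i (m i)) :
    ∏ j, G j (update m i c j) = x * ∏ j, G j (m j) := by
  simp_rw [apply_update (fun j => G j) m i c, prod_update_of_mem (mem_univ i),
    ← mul_prod_erase univ (fun j => G j (m j)) (mem_univ i), h, sdiff_singleton_eq_erase,
    mul_assoc]

/-- `m ℓ` counts the parts of size `ℓ + 1` of a partition of `q` into parts of size at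
most `L`. -/
def partitionTypes (L q : ℕ) : Finset (Fin L → ℕ) :=
  ((univ : Finset (Fin L → Fin (q + 1))).image fun m ℓ => (m ℓ : ℕ)).filter
    fun m => ∑ ℓ : Fin L, ((ℓ : ℕ) + 1) * m ℓ = q

theorem mem_partitionTypes {L q : ℕ} {m : Fin L → ℕ} :
    m ∈ partitionTypes L q ↔ ∑ ℓ : Fin L, ((ℓ : ℕ) + 1) * m ℓ = q := by
  refine ⟨fun hm => (mem_filter.1 hm).2, fun hm => mem_filter.2 ⟨?_, hm⟩⟩
  refine mem_image.2 ⟨fun ℓ => ⟨m ℓ, ?_⟩, mem_univ _, rfl⟩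
  have := single_le_sum (f := fun ℓ : Fin L => ((ℓ : ℕ) + 1) * m ℓ)
    (fun _ _ => Nat.zero_le _) (mem_univ ℓ)
  nlinarith

theorem le_of_mem_partitionTypes {L q : ℕ} {m : Fin L → ℕ} (hm : m ∈ partitionTypes L q)
    (ℓ : Fin L) : ((ℓ : ℕ) + 1) * m ℓ ≤ q :=
  mem_partitionTypes.1 hm ▸
    single_le_sum (f := fun ℓ : Fin L => ((ℓ : ℕ) + 1) * m ℓ) (fun _ _ => Nat.zero_le _)
      (mem_univ ℓ)

theorem sub_add_sum_le_of_mem_partitionTypes {L q r : ℕ} {m : Fin L → ℕ}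
    (hm : m ∈ partitionTypes L q) (hqr : q ≤ r) : r - q + ∑ ℓ, m ℓ ≤ r := by
  have : ∑ ℓ, m ℓ ≤ q :=
    mem_partitionTypes.1 hm ▸ sum_le_sum fun ℓ _ => Nat.le_mul_of_pos_left _ ℓ.succ_pos
  omega

theorem sum_succ_mul_update_succ {L : ℕ} (m : Fin L → ℕ) (ℓ : Fin L) :
    ∑ i : Fin L, ((i : ℕ) + 1) * update m ℓ (m ℓ + 1) i
      = ((ℓ : ℕ) + 1) + ∑ i : Fin L, ((i : ℕ) + 1) * m i :=
  sum_apply_update_of_eq_add (G := fun (i : Fin L) (c : ℕ) => ((i : ℕ) + 1) * c) (by ring)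

theorem partitionTypes_zero (L : ℕ) : partitionTypes L 0 = {0} := by
  ext m
  simp [mem_partitionTypes, funext_iff]

noncomputable def typeDenom {L : ℕ} (m : Fin L → ℕ) : ℝ :=
  ∏ ℓ : Fin L, ((m ℓ)! : ℝ) * (((ℓ : ℕ) + 1)! : ℝ) ^ m ℓ

noncomputable def typeMonomial {L : ℕ} (v : ℕ → ℝ) (m : Fin L → ℕ) : ℝ :=
  ∏ ℓ : Fin L, v ((ℓ : ℕ) + 1) ^ m ℓ

/-- The complete exponential Bell polynomial `Y_q(v 1, …, v q)`, for any `L ≥ q`; the value does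
not depend on `L`, and keeping `L` fixed along the recursion in `q` avoids reindexing tuples. -/
noncomputable def completeBell (L q : ℕ) (v : ℕ → ℝ) : ℝ :=
  ∑ m ∈ partitionTypes L q, (q ! : ℝ) / typeDenom m * typeMonomial v m

theorem typeDenom_pos {L : ℕ} (m : Fin L → ℕ) : 0 < typeDenom m :=
  prod_pos fun _ _ => by positivity

theorem typeDenom_update_succ {L : ℕ} (m : Fin L → ℕ) (ℓ : Fin L) :
    typeDenom (update m ℓ (m ℓ + 1))
      = ((m ℓ + 1 : ℕ) : ℝ) * (((ℓ : ℕ) + 1)! : ℝ) * typeDenom m :=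
  prod_apply_update_of_eq_mul
    (G := fun (ℓ : Fin L) (c : ℕ) => (c ! : ℝ) * (((ℓ : ℕ) + 1)! : ℝ) ^ c)
    (by push_cast [factorial_succ, pow_succ]; ring)

theorem typeMonomial_update_succ {L : ℕ} (v : ℕ → ℝ) (m : Fin L → ℕ) (ℓ : Fin L) :
    typeMonomial v (update m ℓ (m ℓ + 1)) = v ((ℓ : ℕ) + 1) * typeMonomial v m :=
  prod_apply_update_of_eq_mul (G := fun (ℓ : Fin L) (c : ℕ) => v ((ℓ : ℕ) + 1) ^ c)
    (pow_succ' _ _)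

theorem typeMonomial_mul_const {L : ℕ} (v : ℕ → ℝ) (c : ℝ) (m : Fin L → ℕ) :
    typeMonomial (fun j => v j * c) m = typeMonomial v m * c ^ ∑ ℓ, m ℓ := by
  simp only [typeMonomial, mul_pow, prod_mul_distrib, prod_pow_eq_pow_sum]

theorem completeBell_zero (L : ℕ) (v : ℕ → ℝ) : completeBell L 0 v = 1 := by
  simp [completeBell, partitionTypes_zero, typeDenom, typeMonomial]


theorem update_succ_mem_partitionTypes {L q : ℕ} {m : Fin L → ℕ}
    (hm : m ∈ partitionTypes L q) (ℓ : Fin L) :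
    update m ℓ (m ℓ + 1) ∈ partitionTypes L (q + ((ℓ : ℕ) + 1)) := by
  rw [mem_partitionTypes, sum_succ_mul_update_succ, mem_partitionTypes.1 hm, add_comm]

theorem update_pred_mem_partitionTypes {L q : ℕ} {m : Fin L → ℕ}
    (hm : m ∈ partitionTypes L (q + 1)) {ℓ : Fin L} (hℓ : m ℓ ≠ 0) :
    update m ℓ (m ℓ - 1) ∈ partitionTypes L (q - ℓ) := by
  have h := sum_succ_mul_update_succ (update m ℓ (m ℓ - 1)) ℓ
  rw [update_self, Nat.sub_add_cancel (Nat.one_le_iff_ne_zero.2 hℓ), update_idem,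
    update_eq_self, mem_partitionTypes.1 hm] at h
  rw [mem_partitionTypes]
  omega

/-- Removing one part of size `ℓ + 1` is a bijection from the partition types of `q + 1` having
such a part onto those of `q - ℓ`; `(ℓ + 1) * m ℓ` counts the ways to single out that part. -/
theorem sum_partitionTypes_succ_mul_count {L q : ℕ} (v : ℕ → ℝ) (ℓ : Fin L) :
    ∑ m ∈ partitionTypes L (q + 1),
        ((((ℓ : ℕ) + 1) * m ℓ : ℕ) : ℝ) * ((q ! : ℝ) / typeDenom m * typeMonomial v m)
      = (q.choose ℓ : ℝ) * v ((ℓ : ℕ) + 1) * completeBell L (q - ℓ) v := by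
  rcases lt_or_ge q ℓ with hqℓ | hℓq
  · rw [choose_eq_zero_of_lt hqℓ, Nat.cast_zero, zero_mul, zero_mul]
    refine sum_eq_zero fun m hm => ?_
    have := le_of_mem_partitionTypes hm ℓ
    have : m ℓ = 0 := by by_contra h; nlinarith [Nat.one_le_iff_ne_zero.2 h]
    simp [this]
  rw [← sum_filter_of_ne (p := fun m => m ℓ ≠ 0) fun m _ h hm => h (by simp [hm]),
    completeBell, mul_sum]
  symm
  refine sum_nbij' (fun m => update m ℓ (m ℓ + 1)) (fun m => update m ℓ (m ℓ - 1))
    (fun m hm => ?_) (fun m hm => ?_) (fun m _ => by simp) (fun m hm => ?_) (fun m _ => ?_)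
  · refine mem_filter.2 ⟨?_, by simp⟩
    have := update_succ_mem_partitionTypes hm ℓ
    rwa [← add_assoc, Nat.sub_add_cancel hℓq] at this
  · exact update_pred_mem_partitionTypes (mem_filter.1 hm).1 (mem_filter.1 hm).2
  · have hℓ := (mem_filter.1 hm).2
    simp [Nat.sub_add_cancel (Nat.one_le_iff_ne_zero.2 hℓ)]
  · rw [typeDenom_update_succ, typeMonomial_update_succ, update_self,
      ← choose_mul_factorial_mul_factorial hℓq, factorial_succ]
    have := typeDenom_pos m
    push_cast
    field_simp

theorem completeBell_succ {L q : ℕ} (hL : q + 1 ≤ L) (v : ℕ → ℝ) :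
    completeBell L (q + 1) v
      = ∑ j ∈ range (q + 1), (q.choose j : ℝ) * v (j + 1) * completeBell L (q - j) v := by
  calc completeBell L (q + 1) v
      = ∑ m ∈ partitionTypes L (q + 1), ∑ ℓ : Fin L,
          ((((ℓ : ℕ) + 1) * m ℓ : ℕ) : ℝ)
            * ((q ! : ℝ) / typeDenom m * typeMonomial v m) := by
        refine sum_congr rfl fun m hm => ?_
        rw [← sum_mul, ← Nat.cast_sum, mem_partitionTypes.1 hm, factorial_succ]
        push_cast
        ring
    _ = ∑ ℓ : Fin L,
          (q.choose ℓ : ℝ) * v ((ℓ : ℕ) + 1) * completeBell L (q - ℓ) v := by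
        rw [sum_comm]
        exact sum_congr rfl fun ℓ _ => sum_partitionTypes_succ_mul_count v ℓ
    _ = ∑ j ∈ range L, (q.choose j : ℝ) * v (j + 1) * completeBell L (q - j) v :=
        Fin.sum_univ_eq_sum_range
          (fun j => (q.choose j : ℝ) * v (j + 1) * completeBell L (q - j) v) L
    _ = _ := by
        refine (sum_subset (range_subset_range.2 hL) fun j _ hj => ?_).symm
        rw [choose_eq_zero_of_lt (by simpa using hj), Nat.cast_zero, zero_mul, zero_mul]

theorem iteratedDerivWithin_exp_comp {s : Set ℝ} (hs : UniqueDiffOn ℝ s) {h : ℝ → ℝ}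
    {k L : ℕ} (hh : ContDiffOn ℝ k h s) {q : ℕ} (hqk : q ≤ k) (hqL : q ≤ L) {x : ℝ}
    (hx : x ∈ s) :
    iteratedDerivWithin q (fun t => exp (h t)) s x
      = exp (h x) * completeBell L q (fun j => iteratedDerivWithin j h s x) := by
  induction q using Nat.strong_induction_on generalizing x with
  | _ q IH =>
  rcases q with _ | q
  · simp [completeBell_zero]
  have hderiv : Set.EqOn (derivWithin (fun t => exp (h t)) s)
      (derivWithin h s * fun t => exp (h t)) s := fun y hy => by
    rw [derivWithin_exp ((hh.differentiableOn (by exact_mod_cast (by omega : k ≠ 0))) y hy)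
      (hs y hy), Pi.mul_apply, mul_comm]
  have hh' : ContDiffOn ℝ q (derivWithin h s) s := hh.derivWithin hs (by exact_mod_cast hqk)
  have hexp : ContDiffOn ℝ q (fun t => exp (h t)) s :=
    contDiff_exp.comp_contDiffOn (hh.of_le (by exact_mod_cast (by omega : q ≤ k)))
  rw [iteratedDerivWithin_succ', iteratedDerivWithin_congr hderiv hx,
    iteratedDerivWithin_mul hx hs (hh' x hx) (hexp x hx), completeBell_succ hqL, mul_sum]
  refine sum_congr rfl fun j hj => ?_
  have hjq : j ≤ q := Nat.lt_succ_iff.1 (mem_range.1 hj)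
  rw [← iteratedDerivWithin_succ', IH (q - j) (by omega) (by omega) (by omega) hx]
  ring

theorem iteratedDerivWithin_exp_add_mul {s : Set ℝ} (hs : UniqueDiffOn ℝ s) {g : ℝ → ℝ}
    {k : ℕ} (hg : ContDiffOn ℝ k g s) (c : ℝ) {r : ℕ} (hr : r ≤ k) {x : ℝ}
    (hx : x ∈ s) :
    iteratedDerivWithin r (fun t => exp ((t + g t) * c)) s x
      = ∑ q ∈ range (r + 1), ∑ m ∈ partitionTypes q q,
          (r.choose q : ℝ) * ((q ! : ℝ) / typeDenom m
              * typeMonomial (fun j => iteratedDerivWithin j g s x) m)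
            * (c ^ (r - q + ∑ ℓ, m ℓ) * exp ((x + g x) * c)) := by
  have hsplit :
      (fun t => exp ((t + g t) * c)) = (fun t => exp (g t * c)) * fun t => exp (c * t) := by
    ext t
    rw [Pi.mul_apply, ← exp_add]
    ring_nf
  have hgc : ContDiffOn ℝ k (fun t => g t * c) s := hg.mul contDiffOn_const
  have hexp : ContDiffOn ℝ r (fun t => exp (g t * c)) s :=
    contDiff_exp.comp_contDiffOn (hgc.of_le (by exact_mod_cast hr))
  have hlin : ContDiff ℝ r fun t => exp (c * t) := by fun_prop
  rw [hsplit, iteratedDerivWithin_mul hx hs (hexp x hx) hlin.contDiffWithinAt]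
  refine sum_congr rfl fun q hq => ?_
  have hqr : q ≤ r := Nat.lt_succ_iff.1 (mem_range.1 hq)
  rw [iteratedDerivWithin_exp_comp hs hgc (hqr.trans hr) le_rfl hx,
    iteratedDerivWithin_eq_iteratedDeriv hs
      (hlin.of_le (by exact_mod_cast r.sub_le q)).contDiffAt hx,
    iteratedDeriv_exp_const_mul]
  simp_rw [iteratedDerivWithin_mul_const_field, completeBell, typeMonomial_mul_const, mul_sum,
    sum_mul]
  refine sum_congr rfl fun m _ => ?_
  rw [pow_add, show (x + g x) * c = g x * c + c * x by ring, exp_add]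
  ring

theorem ContDiffOn.hasDerivAt_iteratedDerivWithin {U : Set ℝ} (hU : IsOpen U) {f : ℝ → ℝ}
    {k r : ℕ} (hf : ContDiffOn ℝ k f U) (hr : r < k) {x : ℝ} (hx : x ∈ U) :
    HasDerivAt (iteratedDerivWithin r f U) (iteratedDerivWithin (r + 1) f U x) x := by
  rw [iteratedDerivWithin_succ, derivWithin_of_isOpen hU hx]
  exact ((hf.differentiableOn_iteratedDerivWithin (by exact_mod_cast hr) hU.uniqueDiffOn x hx
    ).differentiableAt (hU.mem_nhds hx)).hasDerivAt

section Domination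

variable {X Ω : Type*} [TopologicalSpace X] [MeasurableSpace Ω] {μ : Measure Ω} {U : Set X}

def LocallyDominatedOn (μ : Measure Ω) (F : X → Ω → ℝ) (U : Set X) : Prop :=
  ∀ t₀ ∈ U, ∃ bound : Ω → ℝ, Integrable bound μ ∧
    ∀ᶠ t in 𝓝 t₀, ∀ ω, ‖F t ω‖ ≤ bound ω

theorem LocallyDominatedOn.congr {F G : X → Ω → ℝ} (hF : LocallyDominatedOn μ F U)
    (hU : IsOpen U) (hFG : ∀ t ∈ U, F t = G t) : LocallyDominatedOn μ G U := by
  intro t₀ ht₀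
  obtain ⟨bound, hint, hb⟩ := hF t₀ ht₀
  refine ⟨bound, hint, ?_⟩
  filter_upwards [hb, hU.mem_nhds ht₀] with t hbt ht
  rwa [← hFG t ht]

theorem LocallyDominatedOn.integrable {F : X → Ω → ℝ} (hF : LocallyDominatedOn μ F U)
    {t : X} (ht : t ∈ U) (hmeas : AEStronglyMeasurable (F t) μ) : Integrable (F t) μ := by
  obtain ⟨bound, hint, hb⟩ := hF t ht
  exact hint.mono' hmeas (ae_of_all _ hb.self_of_nhds)

theorem LocallyDominatedOn.add {F G : X → Ω → ℝ} (hF : LocallyDominatedOn μ F U)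
    (hG : LocallyDominatedOn μ G U) : LocallyDominatedOn μ (fun t ω => F t ω + G t ω) U := by
  intro t₀ ht₀
  obtain ⟨bF, hbF, hF⟩ := hF t₀ ht₀
  obtain ⟨bG, hbG, hG⟩ := hG t₀ ht₀
  refine ⟨bF + bG, hbF.add hbG, ?_⟩
  filter_upwards [hF, hG] with t hFt hGt ω
  exact (norm_add_le _ _).trans (add_le_add (hFt ω) (hGt ω))

theorem LocallyDominatedOn.sum {ι : Type*} (s : Finset ι) {F : ι → X → Ω → ℝ}
    (hF : ∀ i ∈ s, LocallyDominatedOn μ (F i) U) :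
    LocallyDominatedOn μ (fun t ω => ∑ i ∈ s, F i t ω) U := by
  induction s using Finset.cons_induction with
  | empty => exact fun _ _ => ⟨0, integrable_zero _ _ _, by simp⟩
  | cons i s hi IH =>
    simp_rw [sum_cons]
    exact (hF i (mem_cons_self i s)).add (IH fun j hj => hF j (mem_cons_of_mem hj))

theorem LocallyDominatedOn.continuousOn_mul {F : X → Ω → ℝ} {c : X → ℝ}
    (hF : LocallyDominatedOn μ F U) (hU : IsOpen U) (hc : ContinuousOn c U) :
    LocallyDominatedOn μ (fun t ω => c t * F t ω) U := by
  intro t₀ ht₀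
  obtain ⟨bound, hint, hb⟩ := hF t₀ ht₀
  refine ⟨fun ω => (‖c t₀‖ + 1) * bound ω, hint.const_mul _, ?_⟩
  have hct : ∀ᶠ t in 𝓝 t₀, ‖c t‖ ≤ ‖c t₀‖ + 1 :=
    ((hc.continuousAt (hU.mem_nhds ht₀)).norm.eventually (gt_mem_nhds (lt_add_one _))).mono
      fun _ => le_of_lt
  filter_upwards [hb, hct] with t hbt hct ω
  rw [norm_mul]
  exact mul_le_mul hct (hbt ω) (norm_nonneg _) (by positivity)

/-- The exponent `a` attains its maximum over a compact neighbourhood of `t₀` at a point of `U`,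
where the integrability hypothesis provides the dominating function (using `Z ≥ 0`). -/
theorem locallyDominatedOn_pow_mul_exp [LocallyCompactSpace X] (hU : IsOpen U) {a : X → ℝ}
    (ha : ContinuousOn a U) {Z : Ω → ℝ} (hZ : ∀ ω, 0 ≤ Z ω) {p : ℕ}
    (hint : ∀ t ∈ U, Integrable (fun ω => Z ω ^ p * exp (a t * Z ω)) μ) :
    LocallyDominatedOn μ (fun t ω => Z ω ^ p * exp (a t * Z ω)) U := by
  intro t₀ ht₀
  obtain ⟨K, hK, hK₀, hKU⟩ := exists_compact_subset hU ht₀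
  obtain ⟨t₁, ht₁, hmax⟩ :=
    hK.exists_isMaxOn ⟨t₀, interior_subset hK₀⟩ (ha.mono hKU)
  refine ⟨_, hint t₁ (hKU ht₁), ?_⟩
  filter_upwards [mem_interior_iff_mem_nhds.1 hK₀] with t ht ω
  have := hZ ω
  rw [Real.norm_of_nonneg (by positivity)]
  gcongr
  exact hmax ht

end Domination

section IteratedIntegral

variable {Ω : Type*} [MeasurableSpace Ω] {μ : Measure Ω} {U : Set ℝ} {F : ℝ → Ω → ℝ}
  {k : ℕ} (hU : IsOpen U) (hF : ∀ ω, ContDiffOn ℝ k (F · ω) U)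
  (hdom : ∀ r ≤ k, LocallyDominatedOn μ (fun t ω => iteratedDerivWithin r (F · ω) U t) U)
  (hmeas : ∀ r ≤ k, ∀ t ∈ U,
    AEStronglyMeasurable (fun ω => iteratedDerivWithin r (F · ω) U t) μ)
include hU hF hdom hmeas

theorem hasDerivAt_integral_iteratedDerivWithin {r : ℕ} (hr : r < k) {t : ℝ} (ht : t ∈ U) :
    HasDerivAt (fun t => ∫ ω, iteratedDerivWithin r (F · ω) U t ∂μ)
      (∫ ω, iteratedDerivWithin (r + 1) (F · ω) U t ∂μ) t := by
  obtain ⟨bound, hint, hb⟩ := hdom (r + 1) hr t ht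
  obtain ⟨s, hs, hsb⟩ := (hb.and (hU.mem_nhds ht)).exists_mem
  refine (hasDerivAt_integral_of_dominated_loc_of_deriv_le hs ?_
    ((hdom r hr.le).integrable ht (hmeas r hr.le t ht)) (hmeas _ hr t ht)
    (ae_of_all _ fun ω x hx => (hsb x hx).1 ω) hint
    (ae_of_all _ fun ω x hx => (hF ω).hasDerivAt_iteratedDerivWithin hU hr (hsb x hx).2)).2
  filter_upwards [hU.mem_nhds ht] with x hx using hmeas r hr.le x hx

theorem iteratedDerivWithin_integral {r : ℕ} (hr : r ≤ k) {t : ℝ} (ht : t ∈ U) :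
    iteratedDerivWithin r (fun t => ∫ ω, F t ω ∂μ) U t
      = ∫ ω, iteratedDerivWithin r (F · ω) U t ∂μ := by
  induction r generalizing t with
  | zero => simp
  | succ r IH =>
    have hEq : Set.EqOn (iteratedDerivWithin r (fun t => ∫ ω, F t ω ∂μ) U)
        (fun t => ∫ ω, iteratedDerivWithin r (F · ω) U t ∂μ) U :=
      fun x hx => IH (by omega) hx
    rw [iteratedDerivWithin_succ, derivWithin_congr hEq (hEq ht), derivWithin_of_isOpen hU ht,
      (hasDerivAt_integral_iteratedDerivWithin hU hF hdom hmeas hr ht).deriv]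

theorem contDiffOn_integral : ContDiffOn ℝ k (fun t => ∫ ω, F t ω ∂μ) U := by
  refine contDiffOn_of_continuousOn_differentiableOn_deriv (fun r hr => ?_) (fun r hr => ?_)
  · have hr : r ≤ k := by exact_mod_cast hr
    refine ContinuousOn.congr (fun t ht => (?_ : ContinuousAt _ t).continuousWithinAt)
      fun t ht => iteratedDerivWithin_integral hU hF hdom hmeas hr ht
    obtain ⟨bound, hint, hb⟩ := hdom r hr t ht
    refine continuousAt_of_dominated ?_ (hb.mono fun x hx => ae_of_all _ hx) hint
      (ae_of_all _ fun ω => ((hF ω).continuousOn_iteratedDerivWithin (by exact_mod_cast hr)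
        hU.uniqueDiffOn).continuousAt (hU.mem_nhds ht))
    filter_upwards [hU.mem_nhds ht] with x hx using hmeas r hr x hx
  · have hr : r < k := by exact_mod_cast hr
    intro t ht
    refine ((hasDerivAt_integral_iteratedDerivWithin hU hF hdom hmeas hr ht
      ).differentiableAt.congr_of_eventuallyEq ?_).differentiableWithinAt
    filter_upwards [hU.mem_nhds ht] with x hx
      using iteratedDerivWithin_integral hU hF hdom hmeas hr.le hx

end IteratedIntegral

section ExpMoment

variable {Ω : Type*} [MeasurableSpace Ω] {μ : Measure Ω} {U : Set ℝ} {g : ℝ → ℝ}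
  {k : ℕ} {Z : Ω → ℝ}

theorem locallyDominatedOn_iteratedDerivWithin_exp (hU : IsOpen U) (hg : ContDiffOn ℝ k g U)
    (hZ : ∀ ω, 0 ≤ Z ω)
    (hint : ∀ p ≤ k, ∀ t ∈ U, Integrable (fun ω => Z ω ^ p * exp ((t + g t) * Z ω)) μ)
    {r : ℕ} (hr : r ≤ k) :
    LocallyDominatedOn μ
      (fun t ω => iteratedDerivWithin r (fun t => exp ((t + g t) * Z ω)) U t) U := by
  refine LocallyDominatedOn.congr ?_ hU fun t ht =>
    funext fun ω => (iteratedDerivWithin_exp_add_mul hU.uniqueDiffOn hg (Z ω) hr ht).symm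
  refine .sum _ fun q hq => .sum _ fun m hm => ?_
  have hqr : q ≤ r := Nat.lt_succ_iff.1 (mem_range.1 hq)
  refine (locallyDominatedOn_pow_mul_exp hU (continuousOn_id.add hg.continuousOn) hZ
    (hint _ ((sub_add_sum_le_of_mem_partitionTypes hm hqr).trans hr))).continuousOn_mul hU ?_
  refine continuousOn_const.mul (continuousOn_const.mul
    (continuousOn_finsetProd _ fun ℓ _ => ?_))
  exact (hg.continuousOn_iteratedDerivWithin (by exact_mod_cast (by omega : (ℓ : ℕ) + 1 ≤ k))
    hU.uniqueDiffOn).pow _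

theorem aestronglyMeasurable_iteratedDerivWithin_exp (hU : IsOpen U) (hg : ContDiffOn ℝ k g U)
    (hZm : Measurable Z) {r : ℕ} (hr : r ≤ k) {t : ℝ} (ht : t ∈ U) :
    AEStronglyMeasurable
      (fun ω => iteratedDerivWithin r (fun t => exp ((t + g t) * Z ω)) U t) μ := by
  simp_rw [iteratedDerivWithin_exp_add_mul hU.uniqueDiffOn hg _ hr ht]
  exact (by fun_prop : Measurable _).aestronglyMeasurable

variable (hU : IsOpen U) (hg : ContDiffOn ℝ k g U) (hZm : Measurable Z) (hZ : ∀ ω, 0 ≤ Z ω)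
  (hint : ∀ p ≤ k, ∀ t ∈ U, Integrable (fun ω => Z ω ^ p * exp ((t + g t) * Z ω)) μ)
include hU hg hZm hZ hint

theorem contDiffOn_integral_exp :
    ContDiffOn ℝ k (fun t => ∫ ω, exp ((t + g t) * Z ω) ∂μ) U :=
  contDiffOn_integral (F := fun t ω => exp ((t + g t) * Z ω)) hU
    (fun _ => contDiff_exp.comp_contDiffOn ((contDiffOn_id.add hg).mul contDiffOn_const))
    (fun _ hr => locallyDominatedOn_iteratedDerivWithin_exp hU hg hZ hint hr)
    (fun _ hr _ ht => aestronglyMeasurable_iteratedDerivWithin_exp hU hg hZm hr ht)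

theorem iteratedDerivWithin_integral_exp {r : ℕ} (hr : r ≤ k) {t : ℝ} (ht : t ∈ U) :
    iteratedDerivWithin r (fun t => ∫ ω, exp ((t + g t) * Z ω) ∂μ) U t
      = ∑ q ∈ range (r + 1), (r.choose q : ℝ) * ∑ m ∈ faaDiBrunoS q,
          ((q ! : ℝ) * ∫ ω, Z ω ^ (r - q) * exp (t * Z ω) * exp (g t * Z ω)
              * ∏ ℓ : Fin q, (iteratedDerivWithin ((ℓ : ℕ) + 1) g U t * Z ω) ^ m ℓ ∂μ)
            / typeDenom m := by
  have hexp (q : ℕ) (hq : q ∈ range (r + 1)) (m : Fin q → ℕ)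
      (hm : m ∈ partitionTypes q q) :
      Integrable (fun ω => Z ω ^ (r - q + ∑ ℓ, m ℓ) * exp ((t + g t) * Z ω)) μ :=
    hint _ ((sub_add_sum_le_of_mem_partitionTypes hm (Nat.lt_succ_iff.1 (mem_range.1 hq))).trans
      hr) t ht
  rw [iteratedDerivWithin_integral (F := fun t ω => exp ((t + g t) * Z ω)) hU
    (fun _ => contDiff_exp.comp_contDiffOn ((contDiffOn_id.add hg).mul contDiffOn_const))
    (fun _ hr => locallyDominatedOn_iteratedDerivWithin_exp hU hg hZ hint hr)
    (fun _ hr _ ht => aestronglyMeasurable_iteratedDerivWithin_exp hU hg hZm hr ht) hr ht]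
  simp_rw [iteratedDerivWithin_exp_add_mul hU.uniqueDiffOn hg _ hr ht]
  rw [integral_finsetSum _ fun q hq => integrable_finsetSum _ fun m hm =>
    (hexp q hq m hm).const_mul _]
  refine sum_congr rfl fun q hq => ?_
  rw [integral_finsetSum _ fun m hm => (hexp q hq m hm).const_mul _, mul_sum]
  refine sum_congr rfl fun m _ => ?_
  have hintegrand : (fun ω => Z ω ^ (r - q) * exp (t * Z ω) * exp (g t * Z ω)
        * ∏ ℓ : Fin q, (iteratedDerivWithin ((ℓ : ℕ) + 1) g U t * Z ω) ^ m ℓ)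
      = fun ω => typeMonomial (fun j => iteratedDerivWithin j g U t) m
          * (Z ω ^ (r - q + ∑ ℓ, m ℓ) * exp ((t + g t) * Z ω)) := by
    funext ω
    rw [show ∏ ℓ : Fin q, (iteratedDerivWithin ((ℓ : ℕ) + 1) g U t * Z ω) ^ m ℓ
        = typeMonomial (fun j => iteratedDerivWithin j g U t * Z ω) m from rfl,
      typeMonomial_mul_const, pow_add, add_mul, exp_add]
    ring
  rw [hintegrand, integral_const_mul, integral_const_mul]
  ring

end ExpMoment

theorem implicit_eta_kth_derivative_general
    (k : ℕ) (hk : 1 ≤ k)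
    {Ω : Type*} [MeasurableSpace Ω] (μ : MeasureTheory.Measure Ω)
    (n d : ℕ) (b : Fin d → ℝ)
    (lam : Fin n → ℝ)
    (γ : Fin n → Fin d → ℝ)
    -- nonnegative random variables with m.g.f. finite near `0`
    (Z : Fin n → Ω → ℝ) (hZmeas : ∀ i, Measurable (Z i)) (hZnn : ∀ i ω, 0 ≤ Z i ω)
    -- a neighborhood `U` of `0`
    (U : Set ℝ) (hUopen : IsOpen U)
    -- the implicit function `u*`
    (ustar : ℝ → Fin d → ℝ)
    (husmooth : ContDiffOn ℝ (k : ℕ∞) ustar U)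
    -- the relevant moments are finite
    (hZint : ∀ i : Fin n, ∀ m : ℕ, m ≤ k → ∀ θ ∈ U,
      Integrable (fun ω => Z i ω ^ m
        * Real.exp ((θ + ∑ a, ustar θ a * γ i a) * Z i ω)) μ)
    -- the definition of `η`
    (η : ℝ → ℝ)
    (hη : ∀ θ : ℝ, η θ = (∑ a, ustar θ a * b a)
      + ∑ i : Fin n, lam i
          * ((∫ ω, Real.exp ((θ + ∑ a, ustar θ a * γ i a) * Z i ω) ∂μ) - 1))
 :
    ∀ θ ∈ U,
      iteratedDeriv k η θ
        = (∑ a, iteratedDeriv k (fun θ' => ustar θ' a) θ * b a)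
          + ∑ i : Fin n, lam i *
              ∑ q ∈ Finset.range (k + 1), (Nat.choose k q : ℝ) *
              ∑ m ∈ faaDiBrunoS q,
                ((Nat.factorial q : ℝ) *
                    ∫ ω, Z i ω ^ (k - q) * Real.exp (θ * Z i ω)
                      * Real.exp ((∑ a, ustar θ a * γ i a) * Z i ω)
                      * ∏ ℓ : Fin q,
                          ((∑ a, iteratedDeriv ((ℓ : ℕ) + 1) (fun θ' => ustar θ' a) θ
                              * γ i a) * Z i ω) ^ (m ℓ) ∂μ)
                  / ∏ ℓ : Fin q,
                      (Nat.factorial (m ℓ) : ℝ)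
                        * (Nat.factorial ((ℓ : ℕ) + 1) : ℝ) ^ (m ℓ) := by
  intro θ hθ
  have hUD : UniqueDiffOn ℝ U := hUopen.uniqueDiffOn
  have hu (a : Fin d) : ContDiffOn ℝ k (fun t => ustar t a) U :=
    (contDiff_apply ℝ ℝ a).comp_contDiffOn husmooth
  have hg (i : Fin n) : ContDiffOn ℝ k (fun t => ∑ a, ustar t a * γ i a) U :=
    .sum fun a _ => (hu a).mul contDiffOn_const
  have hG (i : Fin n) := contDiffOn_integral_exp hUopen (hg i) (hZmeas i) (hZnn i) (hZint i)
  have hgderiv (i : Fin n) (j : ℕ) (hj : j ≤ k) :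
      iteratedDerivWithin j (fun t => ∑ a, ustar t a * γ i a) U θ
        = ∑ a, iteratedDeriv j (fun t => ustar t a) θ * γ i a := by
    rw [iteratedDerivWithin_fun_sum hθ hUD fun a _ =>
      (((hu a).mul contDiffOn_const).of_le (by exact_mod_cast hj)) θ hθ]
    simp_rw [iteratedDerivWithin_mul_const_field, iteratedDerivWithin_of_isOpen hUopen hθ]
  have hub (a : Fin d) := (hu a).mul (contDiffOn_const (c := b a))
  have hlamG (i : Fin n) :=
    (contDiffOn_const (c := lam i)).mul ((hG i).sub (contDiffOn_const (c := (1 : ℝ))))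
  rw [← iteratedDerivWithin_of_isOpen hUopen hθ, funext hη,
    iteratedDerivWithin_fun_add hθ hUD ((ContDiffOn.sum fun a _ => hub a) θ hθ)
      ((ContDiffOn.sum fun i _ => hlamG i) θ hθ),
    iteratedDerivWithin_fun_sum hθ hUD fun a _ => hub a θ hθ,
    iteratedDerivWithin_fun_sum hθ hUD fun i _ => hlamG i θ hθ]
  congr 1
  · simp_rw [iteratedDerivWithin_mul_const_field, iteratedDerivWithin_of_isOpen hUopen hθ]
  refine sum_congr rfl fun i _ => ?_
  simp_rw [iteratedDerivWithin_const_mul_field, sub_eq_neg_add, iteratedDerivWithin_const_add hk,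
    iteratedDerivWithin_integral_exp hUopen (hg i) (hZmeas i) (hZnn i) (hZint i) le_rfl hθ]
  refine congrArg _ (sum_congr rfl fun q hq => congrArg _ (sum_congr rfl fun m _ => ?_))
  have hgderiv' (ℓ : Fin q) := hgderiv i ((ℓ : ℕ) + 1) (by have := mem_range.1 hq; omega)
  simp only [typeDenom, hgderiv']

/-- in the implicit-function setup for `η`, Faà di Bruno's formula
for the `k`-th derivative of `η`. -/
theorem implicit_eta_kth_derivative
    (k : ℕ) (hk : 1 ≤ k)
    {Ω : Type*} [MeasurableSpace Ω] (μ : MeasureTheory.Measure Ω) [IsProbabilityMeasure μ]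
    (n d : ℕ) (b : Fin d → ℝ) (β : Matrix (Fin d) (Fin d) ℝ)
    (α : Fin d → Matrix (Fin d) (Fin d) ℝ) (hα : ∀ j, (α j).IsSymm)
    (lam : Fin n → ℝ) (hlam : ∀ i, 0 ≤ lam i)
    (κ : Fin n → Fin d → ℝ) (γ : Fin n → Fin d → ℝ)
    -- nonnegative random variables with m.g.f. finite near `0`
    (Z : Fin n → Ω → ℝ) (hZmeas : ∀ i, Measurable (Z i)) (hZnn : ∀ i ω, 0 ≤ Z i ω)
    (ε₀ : ℝ) (hε₀ : 0 < ε₀)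
    (hZmgf : ∀ i, ∀ θ : ℝ, |θ| < ε₀ → Integrable (fun ω => Real.exp (θ * Z i ω)) μ)
    -- a neighborhood `U` of `0`
    (U : Set ℝ) (hUopen : IsOpen U) (hU0 : (0 : ℝ) ∈ U)
    -- the implicit function `u*`
    (ustar : ℝ → Fin d → ℝ) (hu0 : ustar 0 = 0)
    (husmooth : ContDiffOn ℝ (k : ℕ∞) ustar U)
    -- the relevant moments are finite
    (hZint : ∀ i : Fin n, ∀ m : ℕ, m ≤ k → ∀ θ ∈ U,
      Integrable (fun ω => Z i ω ^ m
        * Real.exp ((θ + ∑ a, ustar θ a * γ i a) * Z i ω)) μ)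
    -- the defining system of nonlinear equations for `u*`
    (heq : ∀ θ ∈ U, ∀ j : Fin d,
      (∑ i, ustar θ i * β i j)
        - (1/2) * (∑ i, ∑ i', ustar θ i * α j i i' * ustar θ i')
        - (∑ i : Fin n,
            ((∫ ω, Real.exp ((θ + ∑ a, ustar θ a * γ i a) * Z i ω) ∂μ) - 1) * κ i j) = 0)
    -- the definition of `η`
    (η : ℝ → ℝ)
    (hη : ∀ θ : ℝ, η θ = (∑ a, ustar θ a * b a)
      + ∑ i : Fin n, lam i
          * ((∫ ω, Real.exp ((θ + ∑ a, ustar θ a * γ i a) * Z i ω) ∂μ) - 1))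
 :
    ∀ θ ∈ U,
      iteratedDeriv k η θ
        = (∑ a, iteratedDeriv k (fun θ' => ustar θ' a) θ * b a)
          + ∑ i : Fin n, lam i *
              ∑ q ∈ Finset.range (k + 1), (Nat.choose k q : ℝ) *
              ∑ m ∈ faaDiBrunoS q,
                ((Nat.factorial q : ℝ) *
                    ∫ ω, Z i ω ^ (k - q) * Real.exp (θ * Z i ω)
                      * Real.exp ((∑ a, ustar θ a * γ i a) * Z i ω)
                      * ∏ ℓ : Fin q,
                          ((∑ a, iteratedDeriv ((ℓ : ℕ) + 1) (fun θ' => ustar θ' a) θ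
                              * γ i a) * Z i ω) ^ (m ℓ) ∂μ)
                  / ∏ ℓ : Fin q,
                      (Nat.factorial (m ℓ) : ℝ)
                        * (Nat.factorial ((ℓ : ℕ) + 1) : ℝ) ^ (m ℓ) :=
  implicit_eta_kth_derivative_general k hk μ n d b lam γ Z hZmeas hZnn U hUopen ustar husmooth hZint
    η hη
end
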